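/- Let E be a real inner product space, let f : E → ℝ be differentiable with L_Θ-Lipschitz gradient and G-Lipschitz, and let γ : [0,1] → E be twice continuously differentiable with ‖γ''(t)‖ ≤ C·‖γ'(0)‖² for all t ∈ [0,1]. Then the average loss along the curve satisfies ∫₀¹ f(γ(t)) dt ≥ f(γ(0)) + (1/2)·⟨∇f(γ(0)), γ'(0)⟩ − ((L_Θ + G·C)/6)·‖γ'(0)‖². -/

import Mathlib

open scoped RealInnerProductSpace
open Set

/-!
Along the tangent line `s ↦ γ 0 + s • γ' 0`, the Lipschitz gradient gives the lower bound
`f (γ 0) + s ⟪∇f (γ 0), γ' 0⟫ - (L_Θ / 2) s² ‖γ' 0‖²`. The curvature bound keeps `γ s` within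
`C ‖γ' 0‖² s² / 2` of that line, which costs at most `G` times as much in `f`. Integrating the
resulting quadratic in `s` over `[0, 1]` gives the claim.
-/

section

variable {E : Type*} [NormedAddCommGroup E]

theorem nonneg_of_abs_sub_le_mul_norm [Nontrivial E] {f : E → ℝ} {G : ℝ}
    (hf : ∀ x y, |f x - f y| ≤ G * ‖x - y‖) : 0 ≤ G := by
  obtain ⟨x, y, hxy⟩ := exists_pair_ne E
  have hpos : 0 < ‖x - y‖ := norm_pos_iff.2 (sub_ne_zero.2 hxy)
  exact nonneg_of_mul_nonneg_left ((abs_nonneg _).trans (hf x y)) hpos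

variable [InnerProductSpace ℝ E]

/-- The compared function `s ↦ f (x + s • h) - s ⟪∇f x, h⟫ + (L/2) ‖h‖² s²` is monotone on
`[0, 1]`, because the Lipschitz gradient bounds `⟪∇f x - ∇f (x + s • h), h⟫` by `L s ‖h‖²`. -/
theorem quadratic_lower_bound_of_lipschitz_grad (f : E → ℝ) (g : E → E) (L : ℝ)
    (hderiv : ∀ x, HasFDerivAt f (innerSL ℝ (g x)) x)
    (hLip : ∀ x y, ‖g x - g y‖ ≤ L * ‖x - y‖) (x h : E) :
    f x + ⟪g x, h⟫ - L / 2 * ‖h‖ ^ 2 ≤ f (x + h) := by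
  set ψ : ℝ → ℝ := fun s => f (x + s • h) - s * ⟪g x, h⟫ + L / 2 * ‖h‖ ^ 2 * s ^ 2
  have hψ : ∀ s : ℝ,
      HasDerivAt ψ (⟪g (x + s • h), h⟫ - ⟪g x, h⟫ + L / 2 * ‖h‖ ^ 2 * (2 * s)) s := by
    intro s
    have hline : HasDerivAt (fun s : ℝ => x + s • h) h s := by
      simpa using ((hasDerivAt_id s).smul_const h).const_add x
    have hf : HasDerivAt (fun s : ℝ => f (x + s • h)) ⟪g (x + s • h), h⟫ s := by
      have := (hderiv (x + s • h)).comp_hasDerivAt s hline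
      simp only [innerSL_apply_apply] at this
      exact this
    exact (hf.sub (hasDerivAt_mul_const _)).add
      (by simpa using (hasDerivAt_pow 2 s).const_mul (L / 2 * ‖h‖ ^ 2))
  have hmono : MonotoneOn ψ (Icc 0 1) := by
    refine monotoneOn_of_deriv_nonneg (convex_Icc 0 1)
      (fun s _ => (hψ s).continuousAt.continuousWithinAt)
      (fun s _ => (hψ s).differentiableAt.differentiableWithinAt) fun s hs => ?_
    rw [interior_Icc] at hs
    have hgrad : ‖g (x + s • h) - g x‖ ≤ L * (s * ‖h‖) := by
      simpa [norm_smul, abs_of_nonneg hs.1.le] using hLip (x + s • h) x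
    have hinner : ⟪g x - g (x + s • h), h⟫ ≤ ‖g (x + s • h) - g x‖ * ‖h‖ := by
      simpa only [norm_sub_rev] using real_inner_le_norm (g x - g (x + s • h)) h
    rw [inner_sub_left] at hinner
    rw [(hψ s).deriv]
    nlinarith [mul_le_mul_of_nonneg_right hgrad (norm_nonneg h)]
  have := hmono (left_mem_Icc.2 zero_le_one) (right_mem_Icc.2 zero_le_one) zero_le_one
  norm_num [ψ] at this
  linarith

/-- Fencing `γ t - γ a - (t - a) • γ' a` by `K (t - a)² / 2`, whose derivative `K (t - a)`
bounds `‖γ' t - γ' a‖` by the mean value inequality for `γ'`. -/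
theorem norm_sub_tangent_le_of_norm_deriv2_le {γ γ' γ'' : ℝ → E} {a b K : ℝ}
    (hγ' : ∀ t ∈ Icc a b, HasDerivWithinAt γ (γ' t) (Icc a b) t)
    (hγ'' : ∀ t ∈ Icc a b, HasDerivWithinAt γ' (γ'' t) (Icc a b) t)
    (hK : ∀ t ∈ Icc a b, ‖γ'' t‖ ≤ K) {t : ℝ} (ht : t ∈ Icc a b) :
    ‖γ t - γ a - (t - a) • γ' a‖ ≤ K / 2 * (t - a) ^ 2 := by
  have ha : a ∈ Icc a b := left_mem_Icc.2 (ht.1.trans ht.2)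
  have hderiv_sub : ∀ s ∈ Icc a b, ‖γ' s - γ' a‖ ≤ K * (s - a) := fun s hs => by
    simpa [Real.norm_eq_abs, abs_of_nonneg (sub_nonneg.2 hs.1)] using
      (convex_Icc a b).norm_image_sub_le_of_norm_hasDerivWithin_le hγ'' hK ha hs
  have hδ : ∀ s ∈ Icc a b, HasDerivWithinAt (fun s => γ s - γ a - (s - a) • γ' a)
      (γ' s - γ' a) (Icc a b) s := fun s hs => by
    simpa using ((hγ' s hs).sub_const (γ a)).fun_sub
      (((hasDerivWithinAt_id s _).sub_const a).smul_const (γ' a))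
  refine image_norm_le_of_norm_deriv_right_le_deriv_boundary
    (B := fun s => K / 2 * (s - a) ^ 2)
    (fun s hs => (hδ s hs).continuousWithinAt)
    (fun s hs => (hδ s (Ico_subset_Icc_self hs)).mono_of_mem_nhdsWithin
      (Icc_mem_nhdsGE_of_mem hs))
    (by simp) (fun s => ?_) (fun s hs => hderiv_sub s (Ico_subset_Icc_self hs)) ht
  exact (((hasDerivAt_id s).sub_const a).pow 2 |>.const_mul (K / 2)).congr_deriv
    (by simp only [id]; ring)

theorem le_of_lipschitz_grad_of_norm_sub_le (f : E → ℝ) (g : E → E) (L G : ℝ)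
    (hderiv : ∀ x, HasFDerivAt f (innerSL ℝ (g x)) x)
    (hgLip : ∀ x y, ‖g x - g y‖ ≤ L * ‖x - y‖) (hfLip : ∀ x y, |f x - f y| ≤ G * ‖x - y‖)
    (x h y : E) : f x + ⟪g x, h⟫ - L / 2 * ‖h‖ ^ 2 - G * ‖y - (x + h)‖ ≤ f y := by
  have := quadratic_lower_bound_of_lipschitz_grad f g L hderiv hgLip x h
  have := (le_abs_self _).trans (hfLip (x + h) y)
  rw [norm_sub_rev] at this
  linarith

end

theorem integral_quadratic (a b c : ℝ) :
    ∫ t in (0:ℝ)..1, (a + b * t - c * t ^ 2) = a + b / 2 - c / 3 := by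
  have hint : ∀ φ : ℝ → ℝ, Continuous φ → IntervalIntegrable φ MeasureTheory.volume 0 1 :=
    fun φ hφ => hφ.intervalIntegrable 0 1
  rw [intervalIntegral.integral_sub (hint _ (by fun_prop)) (hint _ (by fun_prop)),
    intervalIntegral.integral_add (hint _ (by fun_prop)) (hint _ (by fun_prop)),
    intervalIntegral.integral_const_mul, intervalIntegral.integral_const_mul]
  simp [integral_pow]
  ring

theorem stmt2_general {E : Type*} [NormedAddCommGroup E] [InnerProductSpace ℝ E]
    (f : E → ℝ) (gradf : E → E) (LΘ G C : ℝ)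
    (hderiv : ∀ x : E, HasFDerivAt f (innerSL ℝ (gradf x)) x)
    (hgradLip : ∀ x y : E, ‖gradf x - gradf y‖ ≤ LΘ * ‖x - y‖)
    (hfLip : ∀ x y : E, |f x - f y| ≤ G * ‖x - y‖)
    (γ γ' γ'' : ℝ → E)
    (hγ' : ∀ t ∈ Set.Icc (0:ℝ) 1, HasDerivWithinAt γ (γ' t) (Set.Icc 0 1) t)
    (hγ'' : ∀ t ∈ Set.Icc (0:ℝ) 1, HasDerivWithinAt γ' (γ'' t) (Set.Icc 0 1) t)
    (hcurv : ∀ t ∈ Set.Icc (0:ℝ) 1, ‖γ'' t‖ ≤ C * ‖γ' 0‖ ^ 2) :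
    ∫ t in (0:ℝ)..1, f (γ t) ≥
      f (γ 0) + (1 / 2) * ⟪gradf (γ 0), γ' 0⟫ - ((LΘ + G * C) / 6) * ‖γ' 0‖ ^ 2 := by
  rcases subsingleton_or_nontrivial E with hE | hE
  · simp [Subsingleton.elim (γ' 0) 0, Subsingleton.elim (γ _) (γ 0)]
  have hG : 0 ≤ G := nonneg_of_abs_sub_le_mul_norm hfLip
  have hpointwise : ∀ t ∈ Icc (0:ℝ) 1, f (γ 0) + ⟪gradf (γ 0), γ' 0⟫ * t
      - (LΘ + G * C) / 2 * ‖γ' 0‖ ^ 2 * t ^ 2 ≤ f (γ t) := fun t ht => by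
    have htaylor := norm_sub_tangent_le_of_norm_deriv2_le hγ' hγ'' hcurv ht
    have hlower := le_of_lipschitz_grad_of_norm_sub_le f gradf LΘ G hderiv hgradLip hfLip
      (γ 0) (t • γ' 0) (γ t)
    rw [real_inner_smul_right, norm_smul, Real.norm_eq_abs, mul_pow, sq_abs, ← sub_sub] at hlower
    rw [sub_zero] at htaylor
    nlinarith [mul_le_mul_of_nonneg_left htaylor hG]
  have hint : IntervalIntegrable (fun t => f (γ t)) MeasureTheory.volume 0 1 := by
    refine ContinuousOn.intervalIntegrable ?_
    rw [uIcc_of_le zero_le_one]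
    exact (continuous_iff_continuousAt.2 fun x => (hderiv x).continuousAt).comp_continuousOn
      fun t ht => (hγ' t ht).continuousWithinAt
  calc f (γ 0) + (1 / 2) * ⟪gradf (γ 0), γ' 0⟫ - ((LΘ + G * C) / 6) * ‖γ' 0‖ ^ 2
      = ∫ t in (0:ℝ)..1, (f (γ 0) + ⟪gradf (γ 0), γ' 0⟫ * t
          - (LΘ + G * C) / 2 * ‖γ' 0‖ ^ 2 * t ^ 2) := by
        rw [integral_quadratic]; ring
    _ ≤ ∫ t in (0:ℝ)..1, f (γ t) :=
        intervalIntegral.integral_mono_on zero_le_one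
          ((by fun_prop : Continuous _).intervalIntegrable 0 1) hint hpointwise

/-- Lower bound on the average loss along a curve in terms of the initial
value, the initial directional derivative, and the curvature/smoothness constants. -/
theorem stmt2 {E : Type*} [NormedAddCommGroup E] [InnerProductSpace ℝ E]
    (f : E → ℝ) (gradf : E → E) (LΘ G C : ℝ)
    (hderiv : ∀ x : E, HasFDerivAt f (innerSL ℝ (gradf x)) x)
    (hgradLip : ∀ x y : E, ‖gradf x - gradf y‖ ≤ LΘ * ‖x - y‖)
    (hfLip : ∀ x y : E, |f x - f y| ≤ G * ‖x - y‖)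
    (γ γ' γ'' : ℝ → E)
    (hγ' : ∀ t ∈ Set.Icc (0:ℝ) 1, HasDerivWithinAt γ (γ' t) (Set.Icc 0 1) t)
    (hγ'' : ∀ t ∈ Set.Icc (0:ℝ) 1, HasDerivWithinAt γ' (γ'' t) (Set.Icc 0 1) t)
    (hγ''cont : ContinuousOn γ'' (Set.Icc 0 1))
    (hcurv : ∀ t ∈ Set.Icc (0:ℝ) 1, ‖γ'' t‖ ≤ C * ‖γ' 0‖ ^ 2) :
    ∫ t in (0:ℝ)..1, f (γ t) ≥
      f (γ 0) + (1 / 2) * ⟪gradf (γ 0), γ' 0⟫ - ((LΘ + G * C) / 6) * ‖γ' 0‖ ^ 2 :=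
  stmt2_general f gradf LΘ G C hderiv hgradLip hfLip γ γ' γ'' hγ' hγ'' hcurv
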